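/- arXiv:2602.20115 — 4 statements merged into one kernel-verified Lean document; each statement's English description precedes it below -/
import Mathlib

section
/- Fundamental theorem of compound decisions (optimality part): For every n ≥ 1, every μ ∈ ℝⁿ, and every measurable t : ℝ → ℝ, (1/n) Σ_{i=1}^n ∫ (δ_{G_n(μ)}(z) − μ_i)² φ(z − μ_i) dz ≤ (1/n) Σ_{i=1}^n ∫ (t(z) − μ_i)² φ(z − μ_i) dz; that is, the separable rule acting coordinatewise by the Bayes rule δ_{G_n(μ)} of the empirical distribution minimizes the compound risk over all simple separable decision rules. -/
open MeasureTheory Real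
open scoped ENNReal BigOperators

/-- The standard normal density `φ(x) = (2π)^{-1/2} exp(-x²/2)`. -/
noncomputable def phi (x : ℝ) : ℝ := (Real.sqrt (2 * Real.pi))⁻¹ * Real.exp (-(x ^ 2) / 2)

/-- The Gaussian mixture density `f_G(z) = ∫ φ(z-μ) dG(μ)`. -/
noncomputable def mixDens (G : Measure ℝ) (z : ℝ) : ℝ := ∫ μ, phi (z - μ) ∂G

/-- The posterior-mean Bayes rule `δ_G(z) = (∫ μ φ(z-μ) dG(μ)) / f_G(z)`. -/
noncomputable def bayesRule (G : Measure ℝ) (z : ℝ) : ℝ :=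
  (∫ μ, μ * phi (z - μ) ∂G) / mixDens G z

/-- The empirical distribution `G_n(μ) = (1/n) Σ_i δ_{μ_i}` of the coordinates of `μ`. -/
noncomputable def empDist {n : ℕ} (μ : Fin n → ℝ) : Measure ℝ :=
  (n : ℝ≥0∞)⁻¹ • ∑ i, Measure.dirac (μ i)

lemma phi_pos (x : ℝ) : 0 < phi x := by
  unfold phi; positivity

lemma phi_continuous : Continuous phi := by
  unfold phi; continuity

lemma integrable_dirac'' {f : ℝ → ℝ} (hf : Measurable f) (a : ℝ) :
    Integrable f (Measure.dirac a) := by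
  refine ⟨hf.aestronglyMeasurable, ?_⟩
  rw [HasFiniteIntegral, lintegral_dirac]
  exact ENNReal.coe_lt_top

lemma integral_empDist {n : ℕ} (μ : Fin n → ℝ) (f : ℝ → ℝ) (hf : Measurable f) :
    ∫ x, f x ∂(empDist μ) = (n : ℝ)⁻¹ * ∑ i, f (μ i) := by
  unfold empDist
  rw [integral_smul_measure, integral_finset_sum_measure]
  · simp [integral_dirac' _ _ hf.stronglyMeasurable, ENNReal.toReal_inv, smul_eq_mul]
  · intro i _
    exact integrable_dirac'' hf (μ i)

lemma bayes_eq {n : ℕ} (μ : Fin n → ℝ) (hn : 1 ≤ n) (z : ℝ) :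
    bayesRule (empDist μ) z =
      (∑ i, μ i * phi (z - μ i)) / (∑ i, phi (z - μ i)) := by
  have h1 : Measurable fun x : ℝ => x * phi (z - x) :=
    measurable_id.mul (phi_continuous.measurable.comp (measurable_const.sub measurable_id))
  have h2 : Measurable fun x : ℝ => phi (z - x) :=
    phi_continuous.measurable.comp (measurable_const.sub measurable_id)
  have hn0 : ((n : ℝ))⁻¹ ≠ 0 := by
    have : (0 : ℝ) < n := by exact_mod_cast hn
    positivity
  unfold bayesRule mixDens
  rw [integral_empDist μ _ h1, integral_empDist μ _ h2, mul_div_mul_left _ _ hn0]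

/-- Pointwise weighted least-squares optimality of the weighted mean. -/
lemma pointwise_opt {n : ℕ} (hn : 1 ≤ n) (μ : Fin n → ℝ) (z a : ℝ) :
    ∑ i, (bayesRule (empDist μ) z - μ i) ^ 2 * phi (z - μ i) ≤
      ∑ i, (a - μ i) ^ 2 * phi (z - μ i) := by
  set S : ℝ := ∑ i, phi (z - μ i) with hS
  set M : ℝ := ∑ i, μ i * phi (z - μ i) with hM
  set Q : ℝ := ∑ i, (μ i) ^ 2 * phi (z - μ i) with hQ
  have hSpos : 0 < S := by
    have : (0 : ℝ) < n := by exact_mod_cast hn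
    exact Finset.sum_pos (fun i _ => phi_pos _) (Finset.univ_nonempty_iff.mpr
      ⟨⟨0, by omega⟩⟩)
  have expand : ∀ b : ℝ, ∑ i, (b - μ i) ^ 2 * phi (z - μ i) = b ^ 2 * S - 2 * b * M + Q := by
    intro b
    rw [hS, hM, hQ, Finset.mul_sum, Finset.mul_sum, ← Finset.sum_sub_distrib,
      ← Finset.sum_add_distrib]
    exact Finset.sum_congr rfl fun i _ => by ring
  rw [bayes_eq μ hn z, expand, expand, ← hS, ← hM]
  have key : (M / S) ^ 2 * S - 2 * (M / S) * M = -(M ^ 2 / S) := by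
    field_simp; ring
  rw [key]
  have h : -(M ^ 2 / S) ≤ a ^ 2 * S - 2 * a * M := by
    rw [neg_le, le_div_iff₀ hSpos]
    nlinarith [sq_nonneg (a * S - M)]
  linarith

/-- Fundamental theorem of compound decisions (optimality part): the separable rule acting
coordinatewise by the Bayes rule `δ_{G_n(μ)}` of the empirical distribution minimizes the
compound risk over all simple separable decision rules. -/
theorem fundamental_theorem_compound_optimality
    (n : ℕ) (hn : 1 ≤ n) (μ : Fin n → ℝ) (t : ℝ → ℝ) (ht : Measurable t) :
    (n : ℝ≥0∞)⁻¹ *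
        ∑ i, ∫⁻ z, ENNReal.ofReal ((bayesRule (empDist μ) z - μ i) ^ 2 * phi (z - μ i)) ≤
      (n : ℝ≥0∞)⁻¹ * ∑ i, ∫⁻ z, ENNReal.ofReal ((t z - μ i) ^ 2 * phi (z - μ i)) := by
  have hphi : ∀ c : ℝ, Measurable fun z : ℝ => phi (z - c) := fun c =>
    phi_continuous.measurable.comp (measurable_id.sub measurable_const)
  have hbayes : Measurable (bayesRule (empDist μ)) := by
    have : (bayesRule (empDist μ)) = fun z =>
        (∑ i, μ i * phi (z - μ i)) / (∑ i, phi (z - μ i)) := by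
      funext z; exact bayes_eq μ hn z
    rw [this]
    exact Measurable.div
      (Finset.measurable_sum _ fun i _ => (hphi (μ i)).const_mul _)
      (Finset.measurable_sum _ fun i _ => hphi (μ i))
  have hmb : ∀ i : Fin n, Measurable fun z : ℝ =>
      ENNReal.ofReal ((bayesRule (empDist μ) z - μ i) ^ 2 * phi (z - μ i)) := fun i =>
    ENNReal.measurable_ofReal.comp (((hbayes.sub measurable_const).pow_const 2).mul (hphi (μ i)))
  have hmt : ∀ i : Fin n, Measurable fun z : ℝ =>
      ENNReal.ofReal ((t z - μ i) ^ 2 * phi (z - μ i)) := fun i =>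
    ENNReal.measurable_ofReal.comp (((ht.sub measurable_const).pow_const 2).mul (hphi (μ i)))
  rw [← lintegral_finset_sum _ fun i _ => hmb i, ← lintegral_finset_sum _ fun i _ => hmt i]
  refine mul_le_mul_right (lintegral_mono fun z => ?_) _
  have hnn : ∀ (a : ℝ) (i : Fin n), (0:ℝ) ≤ (a - μ i) ^ 2 * phi (z - μ i) := fun a i =>
    mul_nonneg (sq_nonneg _) (phi_pos _).le
  rw [← ENNReal.ofReal_sum_of_nonneg (fun i _ => hnn _ i),
    ← ENNReal.ofReal_sum_of_nonneg (fun i _ => hnn _ i)]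
  exact ENNReal.ofReal_le_ofReal (pointwise_opt hn μ z (t z))
end

section
/- Global optimality of the point-mass NPMLE near the mean: Let n ≥ 1 and z ∈ ℝⁿ with z̄ := (1/n) Σ_{i=1}^n z_i. If max_{1≤i≤n} |z_i − z̄| ≤ 1, then for every probability measure G on ℝ, ∏_{i=1}^n f_G(z_i) ≤ ∏_{i=1}^n φ(z_i − z̄); that is, the point mass δ_{z̄} maximizes the Gaussian mixture likelihood over all mixing distributions. -/
open MeasureTheory Real
open scoped ENNReal BigOperators

lemma phi_le (x : ℝ) : phi x ≤ (Real.sqrt (2 * Real.pi))⁻¹ := by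
  unfold phi
  have h : Real.exp (-(x ^ 2) / 2) ≤ 1 := Real.exp_le_one_iff.2 (by nlinarith [sq_nonneg x])
  have h2 : (0:ℝ) ≤ (Real.sqrt (2 * Real.pi))⁻¹ := by positivity
  calc (Real.sqrt (2 * Real.pi))⁻¹ * Real.exp (-(x ^ 2) / 2)
      ≤ (Real.sqrt (2 * Real.pi))⁻¹ * 1 := by gcongr
    _ = (Real.sqrt (2 * Real.pi))⁻¹ := mul_one _

lemma phi_div_phi (a b : ℝ) : phi a / phi b = Real.exp ((b^2 - a^2)/2) := by
  unfold phi
  rw [mul_div_mul_left _ _ (by positivity : (Real.sqrt (2 * Real.pi))⁻¹ ≠ 0),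
    ← Real.exp_sub]
  ring_nf

lemma exp_le_cosh_add (d t : ℝ) (hd : |d| ≤ 1) :
    Real.exp (d * t) ≤ Real.cosh t + d * Real.sinh t := by
  obtain ⟨hd1, hd2⟩ := abs_le.1 hd
  have ha : (0:ℝ) ≤ (1 + d)/2 := by linarith
  have hb : (0:ℝ) ≤ (1 - d)/2 := by linarith
  have hab : (1 + d)/2 + (1 - d)/2 = 1 := by ring
  have hconv := convexOn_exp.2 (Set.mem_univ t) (Set.mem_univ (-t)) ha hb hab
  simp only [smul_eq_mul] at hconv
  have heq : (1 + d)/2 * t + (1 - d)/2 * (-t) = d * t := by ring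
  rw [heq] at hconv
  rw [Real.cosh_eq, Real.sinh_eq]
  calc Real.exp (d * t) ≤ (1 + d)/2 * Real.exp t + (1 - d)/2 * Real.exp (-t) := hconv
    _ = (Real.exp t + Real.exp (-t))/2 + d * ((Real.exp t - Real.exp (-t))/2) := by ring

lemma sum_ratio_le (n : ℕ) (z : Fin n → ℝ) (zbar : ℝ)
    (hsum : ∑ i, (z i - zbar) = 0) (hclose : ∀ i, |z i - zbar| ≤ 1) (μ : ℝ) :
    ∑ i, phi (z i - μ) / phi (z i - zbar) ≤ (n : ℝ) := by
  set t := μ - zbar with ht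
  have hcosh : Real.cosh t * Real.exp (-(t^2)/2) ≤ 1 := by
    calc Real.cosh t * Real.exp (-(t^2)/2)
        ≤ Real.exp (t^2/2) * Real.exp (-(t^2)/2) :=
          mul_le_mul_of_nonneg_right (Real.cosh_le_exp_half_sq t) (Real.exp_nonneg _)
      _ = 1 := by rw [← Real.exp_add]; ring_nf; exact Real.exp_zero
  calc ∑ i, phi (z i - μ) / phi (z i - zbar)
      = ∑ i, Real.exp ((z i - zbar) * t) * Real.exp (-(t^2)/2) := by
        refine Finset.sum_congr rfl fun i _ => ?_
        rw [phi_div_phi, ← Real.exp_add]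
        congr 1
        ring
    _ ≤ ∑ i, (Real.cosh t + (z i - zbar) * Real.sinh t) * Real.exp (-(t^2)/2) := by
        refine Finset.sum_le_sum fun i _ => ?_
        exact mul_le_mul_of_nonneg_right (exp_le_cosh_add _ _ (hclose i)) (Real.exp_nonneg _)
    _ = ((n : ℝ) * Real.cosh t + (∑ i, (z i - zbar)) * Real.sinh t) * Real.exp (-(t^2)/2) := by
        rw [← Finset.sum_mul]
        congr 1
        rw [Finset.sum_add_distrib, ← Finset.sum_mul, Finset.sum_const, Finset.card_univ,
          Fintype.card_fin, nsmul_eq_mul]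
    _ = (n : ℝ) * (Real.cosh t * Real.exp (-(t^2)/2)) := by rw [hsum]; ring
    _ ≤ (n : ℝ) * 1 := by
        exact mul_le_mul_of_nonneg_left hcosh (Nat.cast_nonneg n)
    _ = (n : ℝ) := mul_one _

/-- Global optimality of the point-mass NPMLE near the mean: if all coordinates of `z` are
within `1` of their average `z̄`, then the point mass `δ_{z̄}` maximizes the Gaussian mixture
likelihood over all mixing distributions. -/
theorem pointmass_npmle_optimal
    (n : ℕ) (hn : 1 ≤ n) (z : Fin n → ℝ) (zbar : ℝ) (hzbar : zbar = (∑ i, z i) / n)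
    (hclose : ∀ i, |z i - zbar| ≤ 1)
    (G : Measure ℝ) (hGp : IsProbabilityMeasure G) :
    ∏ i, mixDens G (z i) ≤ ∏ i, phi (z i - zbar) := by
  have hn' : (n : ℝ) ≠ 0 := Nat.cast_ne_zero.2 (by omega)
  have hnpos : (0:ℝ) < n := by positivity
  -- sum of deviations is zero
  have hsum0 : ∑ i, (z i - zbar) = 0 := by
    rw [Finset.sum_sub_distrib, Finset.sum_const, Finset.card_univ, Fintype.card_fin,
      nsmul_eq_mul, hzbar]
    field_simp
    ring
  -- integrability
  have hint : ∀ c : ℝ, Integrable (fun μ => phi (c - μ)) G := by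
    intro c
    refine (integrable_const ((Real.sqrt (2 * Real.pi))⁻¹)).mono' ?_ ?_
    · exact (phi_continuous.comp (continuous_const.sub continuous_id)).aestronglyMeasurable
    · filter_upwards with μ
      rw [Real.norm_eq_abs, abs_of_nonneg (phi_pos _).le]
      exact phi_le _
  have hbpos : ∀ i : Fin n, 0 < phi (z i - zbar) := fun i => phi_pos _
  -- the ratios
  set r : Fin n → ℝ := fun i => mixDens G (z i) / phi (z i - zbar) with hr
  have hr0 : ∀ i, 0 ≤ r i := by
    intro i
    apply div_nonneg _ (hbpos i).le
    exact integral_nonneg fun μ => (phi_pos _).le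
  -- the sum of ratios is at most n
  have hrsum : ∑ i, r i ≤ (n : ℝ) := by
    have hstep : ∀ i : Fin n, r i = ∫ μ, phi (z i - μ) / phi (z i - zbar) ∂G := by
      intro i
      rw [hr]
      simp only [mixDens]
      rw [integral_div]
    calc ∑ i, r i = ∑ i, ∫ μ, phi (z i - μ) / phi (z i - zbar) ∂G :=
          Finset.sum_congr rfl fun i _ => hstep i
      _ = ∫ μ, ∑ i, phi (z i - μ) / phi (z i - zbar) ∂G := by
          rw [integral_finset_sum]
          intro i _
          exact (hint (z i)).div_const _
      _ ≤ ∫ _, (n : ℝ) ∂G := by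
          refine integral_mono ?_ (integrable_const _) ?_
          · exact integrable_finset_sum _ fun i _ => (hint (z i)).div_const _
          · intro μ
            exact sum_ratio_le n z zbar hsum0 hclose μ
      _ = (n : ℝ) := by simp
  -- AM-GM: product of ratios is at most 1
  have hprod_r : ∏ i, r i ≤ 1 := by
    have hw : ∑ _i : Fin n, (1/(n:ℝ)) = 1 := by
      rw [Finset.sum_const, Finset.card_univ, Fintype.card_fin, nsmul_eq_mul]
      field_simp
    have hgm := Real.geom_mean_le_arith_mean_weighted Finset.univ (fun _ => 1/(n:ℝ)) r
      (fun i _ => by positivity) hw (fun i _ => hr0 i)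
    have h1 : ∑ i, (1/(n:ℝ)) * r i ≤ 1 := by
      rw [← Finset.mul_sum]
      calc (1/(n:ℝ)) * ∑ i, r i ≤ (1/(n:ℝ)) * (n:ℝ) := by
            exact mul_le_mul_of_nonneg_left hrsum (by positivity)
        _ = 1 := by field_simp
    have h2 : ∏ i, r i ^ (1/(n:ℝ)) ≤ 1 := hgm.trans h1
    have hx0 : 0 ≤ ∏ i, r i ^ (1/(n:ℝ)) :=
      Finset.prod_nonneg fun i _ => Real.rpow_nonneg (hr0 i) _
    have h3 : (∏ i, r i ^ (1/(n:ℝ))) ^ (n:ℝ) ≤ 1 :=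
      Real.rpow_le_one hx0 h2 (Nat.cast_nonneg n)
    calc ∏ i, r i = (∏ i, r i ^ (1/(n:ℝ))) ^ (n:ℝ) := by
          rw [← Real.finset_prod_rpow _ _ (fun i _ => Real.rpow_nonneg (hr0 i) _)]
          refine (Finset.prod_congr rfl fun i _ => ?_)
          rw [← Real.rpow_mul (hr0 i), one_div, inv_mul_cancel₀ hn', Real.rpow_one]
      _ ≤ 1 := h3
  -- conclude
  have hfactor : ∏ i, mixDens G (z i) = (∏ i, r i) * ∏ i, phi (z i - zbar) := by
    rw [← Finset.prod_mul_distrib]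
    refine Finset.prod_congr rfl fun i _ => ?_
    rw [hr]
    exact (div_mul_cancel₀ _ (hbpos i).ne').symm
  rw [hfactor]
  exact mul_le_of_le_one_left (Finset.prod_nonneg fun i _ => (hbpos i).le) hprod_r
end

section
/- Continuity of the squared risk in the mixing distribution: Fix M > 0, n ≥ 1, and a measurable map t : ℝⁿ → [−M, M]ⁿ. If G_k, G are probability measures on [−M, M] and G_k converges weakly to G, then R²(t, G_k) → R²(t, G), where R²(t, G) := (1/n) ∫_{[−M,M]ⁿ} E_μ‖t(Z) − μ‖₂² dG^{⊗n}(μ). -/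
open MeasureTheory ProbabilityTheory Real Filter Topology
open scoped ENNReal BigOperators
open scoped Pointwise

/-- The compound data distribution: `Z_i ~ N(μ_i, 1)` independent. -/
noncomputable def Pmu {n : ℕ} (μ : Fin n → ℝ) : Measure (Fin n → ℝ) :=
  Measure.pi fun i => gaussianReal (μ i) 1

/-- The squared compound risk `R²(t, μ) = (1/n) E_μ ‖t(Z) - μ‖₂²`. -/
noncomputable def R2mu {n : ℕ} (t : (Fin n → ℝ) → Fin n → ℝ) (μ : Fin n → ℝ) : ℝ :=
  (∫ z, ∑ i, (t z i - μ i) ^ 2 ∂(Pmu μ)) / n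

/-- The squared empirical Bayes risk `R²(t, G) = ∫ R²(t, μ) dG^{⊗n}(μ)`. -/
noncomputable def R2G {n : ℕ} (t : (Fin n → ℝ) → Fin n → ℝ) (G : Measure ℝ) : ℝ :=
  ∫ μ, R2mu t μ ∂(Measure.pi fun _ : Fin n => G)


theorem my_lintegral_pi_prod : ∀ (n : ℕ) (ν : Fin n → Measure ℝ), (∀ i, SigmaFinite (ν i)) →
    ∀ (f : Fin n → ℝ → ℝ≥0∞), (∀ i, Measurable (f i)) →
    ∫⁻ x, ∏ i, f i (x i) ∂Measure.pi ν = ∏ i, ∫⁻ x, f i x ∂ν i := by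
  intro n
  induction n with
  | zero =>
    intro ν _ f _
    simp [lintegral_const, Measure.pi_univ]
  | succ n ih =>
    intro ν hν f hf
    haveI := hν
    have hmp := (measurePreserving_piFinSuccAbove ν 0).symm
    rw [← hmp.map_eq, lintegral_map_equiv]
    simp_rw [MeasurableEquiv.piFinSuccAbove_symm_apply, Fin.insertNthEquiv,
      Fin.prod_univ_succ, Fin.insertNth_zero, Equiv.coe_fn_mk, Fin.cons_succ,
      Fin.zero_succAbove, Fin.cons_zero, cast_eq]
    rw [lintegral_prod_mul (f := fun a => f 0 a)
        (g := fun x : Fin n → ℝ => ∏ i : Fin n, f i.succ (x i)) (hf 0).aemeasurable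
        ((Finset.measurable_prod Finset.univ fun i _ =>
          ((hf i.succ).comp (measurable_pi_apply i))).aemeasurable),
      ih _ (fun i => hν _) _ (fun i => hf _)]

theorem my_integral_pi_prod : ∀ (n : ℕ) (ν : Fin n → Measure ℝ), (∀ i, SigmaFinite (ν i)) →
    ∀ (f : Fin n → ℝ → ℝ),
    ∫ x, ∏ i, f i (x i) ∂Measure.pi ν = ∏ i, ∫ x, f i x ∂ν i := by
  intro n
  induction n with
  | zero =>
    intro ν _ f
    have : IsProbabilityMeasure (Measure.pi ν) := by
      constructor
      rw [Measure.pi_univ]; simp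
    simp
  | succ n ih =>
    intro ν hν f
    haveI := hν
    have hmp := (measurePreserving_piFinSuccAbove ν 0).symm
    rw [← hmp.map_eq, integral_map_equiv]
    simp_rw [MeasurableEquiv.piFinSuccAbove_symm_apply, Fin.insertNthEquiv,
      Fin.prod_univ_succ, Fin.insertNth_zero, Equiv.coe_fn_mk, Fin.cons_succ,
      Fin.zero_succAbove, Fin.cons_zero, cast_eq]
    rw [integral_prod_mul (f := fun a => f 0 a)
        (g := fun x : Fin n → ℝ => ∏ i : Fin n, f i.succ (x i)),
      ih _ (fun i => hν _)]

theorem Pmu_eq_withDensity {n : ℕ} (μ : Fin n → ℝ) :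
    Pmu μ = (volume : Measure (Fin n → ℝ)).withDensity
      (fun z => ENNReal.ofReal (∏ i, gaussianPDFReal (μ i) 1 (z i))) := by
  rw [Pmu]
  refine Measure.pi_eq (μ := fun i => gaussianReal (μ i) 1) fun s hs => ?_
  rw [withDensity_apply _ (MeasurableSet.univ_pi hs)]
  have h1 : ∀ z : Fin n → ℝ, (Set.pi Set.univ s).indicator
      (fun z => ENNReal.ofReal (∏ i, gaussianPDFReal (μ i) 1 (z i))) z
      = ∏ i, (s i).indicator (fun x => gaussianPDF (μ i) 1 x) (z i) := by
    intro z
    by_cases hz : z ∈ Set.pi Set.univ s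
    · rw [Set.indicator_of_mem hz, ENNReal.ofReal_prod_of_nonneg
        (fun i _ => gaussianPDFReal_nonneg _ _ _)]
      refine Finset.prod_congr rfl fun i _ => ?_
      rw [Set.indicator_of_mem (hz i (Set.mem_univ i))]
      rfl
    · rw [Set.indicator_of_notMem hz]
      rw [Set.mem_univ_pi] at hz
      push_neg at hz
      obtain ⟨i, hi⟩ := hz
      exact (Finset.prod_eq_zero (Finset.mem_univ i)
        (Set.indicator_of_notMem hi _)).symm
  rw [← lintegral_indicator (MeasurableSet.univ_pi hs) _]
  simp_rw [h1]
  rw [volume_pi, my_lintegral_pi_prod n (fun _ => volume) (fun _ => inferInstance) _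
    (fun i => ((measurable_gaussianPDF (μ i) 1).indicator (hs i)))]
  refine Finset.prod_congr rfl fun i _ => ?_
  rw [lintegral_indicator (hs i) _]
  exact (gaussianReal_apply (μ i) one_ne_zero (s i)).symm

theorem R2mu_eq {n : ℕ} (t : (Fin n → ℝ) → Fin n → ℝ) (μ : Fin n → ℝ) :
    R2mu t μ = (∫ z, (∏ i, gaussianPDFReal (μ i) 1 (z i)) * (∑ i, (t z i - μ i) ^ 2)
      ∂(volume : Measure (Fin n → ℝ))) / n := by
  rw [R2mu, Pmu_eq_withDensity]
  congr 1
  have hd : Measurable fun z : Fin n → ℝ =>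
      (∏ i, gaussianPDFReal (μ i) 1 (z i)).toNNReal :=
    measurable_real_toNNReal.comp <| Finset.measurable_prod _ fun i _ =>
      (measurable_gaussianPDFReal (μ i) 1).comp (measurable_pi_apply i)
  have h0 : (fun z : Fin n → ℝ => ENNReal.ofReal (∏ i, gaussianPDFReal (μ i) 1 (z i)))
      = fun z => ((∏ i, gaussianPDFReal (μ i) 1 (z i)).toNNReal : ℝ≥0∞) := rfl
  rw [h0, integral_withDensity_eq_integral_smul hd]
  refine integral_congr_ae (Eventually.of_forall fun z => ?_)
  have hnn : 0 ≤ ∏ i, gaussianPDFReal (μ i) 1 (z i) :=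
    Finset.prod_nonneg fun i _ => gaussianPDFReal_nonneg _ _ _
  simp [NNReal.smul_def, Real.coe_toNNReal _ hnn]

theorem continuous_R2mu {n : ℕ} (M : ℝ) (hM : 0 < M)
    (t : (Fin n → ℝ) → Fin n → ℝ) (ht : Measurable t)
    (htb : ∀ z i, t z i ∈ Set.Icc (-M) M) :
    Continuous (R2mu t) := by
  have key : Continuous fun μ : Fin n → ℝ =>
      ∫ z, (∏ i, gaussianPDFReal (μ i) 1 (z i)) * (∑ i, (t z i - μ i) ^ 2)
        ∂(volume : Measure (Fin n → ℝ)) := by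
    rw [continuous_iff_continuousAt]
    intro μ₀
    set C : ℝ := (n : ℝ) * (M + (‖μ₀‖ + 1)) ^ 2 with hC
    refine continuousAt_of_dominated (bound := fun z => C * ∏ i, (Real.exp 1 *
      (Real.sqrt (2 * π))⁻¹ * Real.exp (-(1/4) * (z i - μ₀ i) ^ 2))) ?_ ?_ ?_ ?_
    · refine Eventually.of_forall fun μ => (Measurable.aestronglyMeasurable ?_)
      exact ((Finset.measurable_prod _ fun i _ =>
        (measurable_gaussianPDFReal (μ i) 1).comp (measurable_pi_apply i)).mul
        (Finset.measurable_sum _ fun i _ =>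
          (((measurable_pi_apply i).comp ht).sub measurable_const).pow_const 2))
    · -- domination on the ball of radius 1
      filter_upwards [Metric.ball_mem_nhds μ₀ one_pos] with μ hμ
      refine Eventually.of_forall fun z => ?_
      have hprod_nonneg : 0 ≤ ∏ i, gaussianPDFReal (μ i) 1 (z i) :=
        Finset.prod_nonneg fun i _ => gaussianPDFReal_nonneg _ _ _
      have hsum_nonneg : 0 ≤ ∑ i, (t z i - μ i) ^ 2 :=
        Finset.sum_nonneg fun i _ => sq_nonneg _
      rw [Real.norm_eq_abs, abs_of_nonneg (mul_nonneg hprod_nonneg hsum_nonneg)]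
      have hsum : (∑ i, (t z i - μ i) ^ 2) ≤ C := by
        rw [hC]
        have : ∀ i ∈ Finset.univ, (t z i - μ i) ^ 2 ≤ (M + (‖μ₀‖ + 1)) ^ 2 := by
          intro i _
          have h1 := (htb z i).1
          have h2 := (htb z i).2
          have h3 : |μ i - μ₀ i| ≤ 1 := by
            have := dist_le_pi_dist μ μ₀ i
            rw [Real.dist_eq] at this
            linarith [Metric.mem_ball.mp hμ, dist_nonneg (x := μ) (y := μ₀)]
          have h4 : |μ₀ i| ≤ ‖μ₀‖ := by
            simpa [Real.norm_eq_abs] using norm_le_pi_norm μ₀ i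
          rw [abs_le] at h3 h4
          nlinarith [norm_nonneg μ₀]
        calc (∑ i, (t z i - μ i) ^ 2) ≤ ∑ _i : Fin n, (M + (‖μ₀‖ + 1)) ^ 2 :=
              Finset.sum_le_sum this
        _ = (n : ℝ) * (M + (‖μ₀‖ + 1)) ^ 2 := by
              rw [Finset.sum_const, Finset.card_univ, Fintype.card_fin, nsmul_eq_mul]
      have hprod : (∏ i, gaussianPDFReal (μ i) 1 (z i)) ≤
          ∏ i, (Real.exp 1 * (Real.sqrt (2 * π))⁻¹ *
            Real.exp (-(1/4) * (z i - μ₀ i) ^ 2)) := by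
        refine Finset.prod_le_prod (fun i _ => gaussianPDFReal_nonneg _ _ _) fun i _ => ?_
        have h3 : |μ i - μ₀ i| ≤ 1 := by
          have := dist_le_pi_dist μ μ₀ i
          rw [Real.dist_eq] at this
          linarith [Metric.mem_ball.mp hμ]
        rw [abs_le] at h3
        have he2 : (μ i - μ₀ i) ^ 2 ≤ 1 := by nlinarith
        have hexp : Real.exp (-(z i - μ i) ^ 2 / 2) ≤
            Real.exp 1 * Real.exp (-(1/4) * (z i - μ₀ i) ^ 2) := by
          rw [← Real.exp_add, Real.exp_le_exp]
          nlinarith [sq_nonneg ((z i - μ₀ i) - 2 * (μ i - μ₀ i))]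
        have hpdf : gaussianPDFReal (μ i) 1 (z i)
            = (Real.sqrt (2 * π))⁻¹ * Real.exp (-(z i - μ i) ^ 2 / 2) := by
          rw [gaussianPDFReal]
          norm_num
        rw [hpdf]
        have hs : 0 < Real.sqrt (2 * π) := Real.sqrt_pos.mpr (by positivity)
        calc (Real.sqrt (2 * π))⁻¹ * Real.exp (-(z i - μ i) ^ 2 / 2)
            ≤ (Real.sqrt (2 * π))⁻¹ * (Real.exp 1 * Real.exp (-(1/4) * (z i - μ₀ i) ^ 2)) := by
              exact mul_le_mul_of_nonneg_left hexp (by positivity)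
          _ = Real.exp 1 * (Real.sqrt (2 * π))⁻¹ * Real.exp (-(1/4) * (z i - μ₀ i) ^ 2) := by
              ring
      calc (∏ i, gaussianPDFReal (μ i) 1 (z i)) * (∑ i, (t z i - μ i) ^ 2)
          ≤ (∏ i, (Real.exp 1 * (Real.sqrt (2 * π))⁻¹ *
              Real.exp (-(1/4) * (z i - μ₀ i) ^ 2))) * C :=
            mul_le_mul hprod hsum hsum_nonneg (Finset.prod_nonneg fun i _ => by positivity)
        _ = C * ∏ i, (Real.exp 1 * (Real.sqrt (2 * π))⁻¹ *
              Real.exp (-(1/4) * (z i - μ₀ i) ^ 2)) := mul_comm _ _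
    · refine Integrable.const_mul ?_ C
      refine Integrable.fintype_prod (f := fun i x => Real.exp 1 * (Real.sqrt (2 * π))⁻¹ *
        Real.exp (-(1/4) * (x - μ₀ i) ^ 2)) fun i => ?_
      exact ((integrable_exp_neg_mul_sq (by norm_num : (0:ℝ) < 1/4)).comp_sub_right
        (μ₀ i)).const_mul _
    · refine Eventually.of_forall fun z => Continuous.continuousAt ?_
      refine Continuous.mul ?_ ?_
      · refine continuous_finset_prod _ fun i _ => ?_
        simp only [gaussianPDFReal]
        fun_prop
      · refine continuous_finset_sum _ fun i _ => ?_
        fun_prop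
  have : R2mu t = fun μ => (∫ z, (∏ i, gaussianPDFReal (μ i) 1 (z i)) *
      (∑ i, (t z i - μ i) ^ 2) ∂(volume : Measure (Fin n → ℝ))) / n := by
    funext μ; exact R2mu_eq t μ
  rw [this]
  exact key.div_const _

/-- Continuity of the squared risk in the mixing distribution: if `G_k → G` weakly (tested
against bounded continuous functions), probability measures supported in `[-M,M]`, then
`R²(t, G_k) → R²(t, G)` for any measurable estimator with values in `[-M,M]ⁿ`. -/
theorem risk_continuous_in_mixing
    (M : ℝ) (hM : 0 < M) (n : ℕ) (hn : 1 ≤ n)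
    (t : (Fin n → ℝ) → Fin n → ℝ) (ht : Measurable t)
    (htb : ∀ z i, t z i ∈ Set.Icc (-M) M)
    (G : ℕ → Measure ℝ) (Glim : Measure ℝ)
    (hGkp : ∀ k, IsProbabilityMeasure (G k)) (hGp : IsProbabilityMeasure Glim)
    (hGk : ∀ k, (G k) (Set.Icc (-M) M)ᶜ = 0) (hG : Glim (Set.Icc (-M) M)ᶜ = 0)
    (hweak : ∀ f : BoundedContinuousFunction ℝ ℝ,
      Tendsto (fun k => ∫ x, f x ∂(G k)) atTop (𝓝 (∫ x, f x ∂Glim))) :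
    Tendsto (fun k => R2G t (G k)) atTop (𝓝 (R2G t Glim)) := by
  classical
  have hMM : (-M) ≤ M := by linarith
  set I : Set ℝ := Set.Icc (-M) M with hI
  -- the clamping map
  let pr : ℝ → I := fun x => Set.projIcc (-M) M hMM x
  have hpr : Continuous pr := continuous_projIcc
  let pc : (Fin n → ℝ) → (Fin n → I) := fun μ i => pr (μ i)
  have hpc : Continuous pc := continuous_pi fun i => hpr.comp (continuous_apply i)
  have hcont : Continuous (R2mu t) := continuous_R2mu M hM t ht htb
  let g₀ : C(Fin n → I, ℝ) := ⟨fun x => R2mu t (fun i => (x i : ℝ)),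
    hcont.comp (continuous_pi fun i => continuous_subtype_val.comp (continuous_apply i))⟩
  -- the functional J
  let J : Measure ℝ → C(Fin n → I, ℝ) → ℝ := fun ν g =>
    ∫ μ, g (pc μ) ∂(Measure.pi fun _ : Fin n => ν)
  -- integrability
  have hInt : ∀ (ν : Measure ℝ), IsProbabilityMeasure ν → ∀ g : C(Fin n → I, ℝ),
      Integrable (fun μ => g (pc μ)) (Measure.pi fun _ : Fin n => ν) := by
    intro ν hν g
    haveI := hν
    exact ((BoundedContinuousFunction.mkOfCompact g).compContinuous ⟨pc, hpc⟩).integrable _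
  -- J agrees with the risk integral
  have hae : ∀ (ν : Measure ℝ), IsProbabilityMeasure ν → ν Iᶜ = 0 →
      R2G t ν = J ν g₀ := by
    intro ν hν hνI
    haveI := hν
    refine integral_congr_ae ?_
    have hnull : (Measure.pi fun _ : Fin n => ν) {μ | ¬ ∀ i, μ i ∈ I} = 0 := by
      refine measure_mono_null (fun μ hμ => ?_)
        (measure_iUnion_null fun i => Measure.pi_eval_preimage_null
          (μ := fun _ : Fin n => ν) (i := i) (s := Iᶜ) hνI)
      simp only [Set.mem_setOf_eq, not_forall] at hμ
      obtain ⟨i, hi⟩ := hμ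
      exact Set.mem_iUnion.mpr ⟨i, hi⟩
    refine (ae_iff.mpr ?_ : ∀ᵐ μ ∂(Measure.pi fun _ : Fin n => ν), R2mu t μ = g₀ (pc μ))
    refine measure_mono_null (fun μ hμ => ?_) hnull
    simp only [Set.mem_setOf_eq] at hμ ⊢
    intro hall
    apply hμ
    have : (fun i => ((pc μ i : ℝ))) = μ := by
      funext i
      simp only [pc, pr, Set.projIcc_of_mem hMM (hall i)]
    simp only [g₀, ContinuousMap.coe_mk, this]
  -- the product functions
  set D : Set C(Fin n → I, ℝ) :=
    {g | ∃ q : Fin n → C(I, ℝ), ∀ x, g x = ∏ i, q i (x i)} with hD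
  -- one-dimensional weak convergence for clamped continuous functions
  have h1d : ∀ q : C(I, ℝ), Tendsto (fun k => ∫ x, q (pr x) ∂(G k)) atTop
      (𝓝 (∫ x, q (pr x) ∂Glim)) := by
    intro q
    exact hweak ((BoundedContinuousFunction.mkOfCompact q).compContinuous ⟨pr, hpr⟩)
  -- J of a product function factorizes
  have hJprod : ∀ (ν : Measure ℝ), IsProbabilityMeasure ν → ∀ (q : Fin n → C(I, ℝ))
      (g : C(Fin n → I, ℝ)), (∀ x, g x = ∏ i, q i (x i)) →
      J ν g = ∏ i, ∫ x, (q i) (pr x) ∂ν := by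
    intro ν hν q g hq
    haveI := hν
    have : J ν g = ∫ μ, ∏ i, (q i) (pr (μ i)) ∂(Measure.pi fun _ : Fin n => ν) := by
      refine integral_congr_ae (Eventually.of_forall fun μ => ?_)
      simp only [J, hq (pc μ)]
      rfl
    rw [this, my_integral_pi_prod n (fun _ => ν) (fun _ => inferInstance)
      (fun i x => (q i) (pr x))]
  -- the convergence property
  set P : C(Fin n → I, ℝ) → Prop := fun g =>
    Tendsto (fun k => J (G k) g) atTop (𝓝 (J Glim g)) with hP
  have hDP : ∀ g ∈ D, P g := by
    rintro g ⟨q, hq⟩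
    have hk : ∀ k, J (G k) g = ∏ i, ∫ x, (q i) (pr x) ∂(G k) :=
      fun k => hJprod (G k) (hGkp k) q g hq
    have hlim : J Glim g = ∏ i, ∫ x, (q i) (pr x) ∂Glim := hJprod Glim hGp q g hq
    simp only [hP, hk, hlim]
    exact tendsto_finset_prod _ fun i _ => h1d (q i)
  -- P is closed under linear combinations
  have hVP : ∀ g ∈ Submodule.span ℝ D, P g := by
    intro g hg
    refine Submodule.span_induction (p := fun g _ => P g) hDP ?_ ?_ ?_ hg
    · simp only [hP]
      have : ∀ ν : Measure ℝ, J ν (0 : C(Fin n → I, ℝ)) = 0 := by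
        intro ν; simp [J]
      simp only [this]
      exact tendsto_const_nhds
    · intro a b _ _ hpa hpb
      have hadd : ∀ (ν : Measure ℝ), IsProbabilityMeasure ν →
          J ν (a + b) = J ν a + J ν b := by
        intro ν hν
        haveI := hν
        simp only [J, ContinuousMap.add_apply]
        exact integral_add (hInt ν hν a) (hInt ν hν b)
      have h1 : ∀ k, J (G k) (a + b) = J (G k) a + J (G k) b :=
        fun k => hadd (G k) (hGkp k)
      simp only [hP, h1, hadd Glim hGp]
      exact hpa.add hpb
    · intro c a _ hpa
      have hsmul : ∀ ν : Measure ℝ, J ν (c • a) = c * J ν a := by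
        intro ν
        simp only [J, ContinuousMap.smul_apply, smul_eq_mul]
        rw [integral_const_mul]
      simp only [hP, hsmul]
      exact hpa.const_mul c
  -- the coordinate subalgebra is contained in the span of products
  have hAV : ∀ g ∈ Algebra.adjoin ℝ
      (Set.range fun i : Fin n => (⟨fun x => (x i : ℝ),
        continuous_subtype_val.comp (continuous_apply i)⟩ : C(Fin n → I, ℝ))),
      g ∈ Submodule.span ℝ D := by
    intro g hg
    refine Algebra.adjoin_induction (p := fun g _ => g ∈ Submodule.span ℝ D)
      ?_ ?_ ?_ ?_ hg
    · rintro x ⟨i, rfl⟩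
      refine Submodule.subset_span ⟨Function.update (fun _ => (1 : C(I, ℝ))) i
        ⟨fun y => (y : ℝ), continuous_subtype_val⟩, fun x => ?_⟩
      rw [Finset.prod_eq_single i (fun j _ hj => by
          simp [Function.update_of_ne hj]) (fun h => absurd (Finset.mem_univ i) h)]
      simp
    · intro r
      have h1 : (1 : C(Fin n → I, ℝ)) ∈ D := ⟨fun _ => 1, fun x => by simp⟩
      have : (algebraMap ℝ C(Fin n → I, ℝ)) r = r • (1 : C(Fin n → I, ℝ)) :=
        Algebra.algebraMap_eq_smul_one r
      rw [this]
      exact Submodule.smul_mem _ _ (Submodule.subset_span h1)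
    · intro x y _ _ hx hy
      exact Submodule.add_mem _ hx hy
    · intro x y _ _ hx hy
      have hDD : D * D ⊆ D := by
        rintro z ⟨a, ha, b, hb, rfl⟩
        obtain ⟨qa, hqa⟩ := ha
        obtain ⟨qb, hqb⟩ := hb
        exact ⟨fun i => qa i * qb i, fun x => by
          simp [hqa x, hqb x, Finset.prod_mul_distrib]⟩
      have := Submodule.mul_mem_mul hx hy
      rw [Submodule.span_mul_span] at this
      exact Submodule.span_le.mpr
        (le_trans hDD Submodule.subset_span) this
  -- Stone-Weierstrass
  have hclos : g₀ ∈ closure ((Submodule.span ℝ D : Submodule ℝ C(Fin n → I, ℝ)) :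
      Set C(Fin n → I, ℝ)) := by
    set A : Subalgebra ℝ C(Fin n → I, ℝ) := Algebra.adjoin ℝ
      (Set.range fun i : Fin n => (⟨fun x => (x i : ℝ),
        continuous_subtype_val.comp (continuous_apply i)⟩ : C(Fin n → I, ℝ))) with hA
    have hsep : A.SeparatesPoints := by
      intro x y hxy
      have : ∃ i, x i ≠ y i := by
        by_contra h
        push_neg at h
        exact hxy (funext h)
      obtain ⟨i, hi⟩ := this
      refine ⟨_, ⟨(⟨fun x => (x i : ℝ),
        continuous_subtype_val.comp (continuous_apply i)⟩ : C(Fin n → I, ℝ)),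
        Algebra.subset_adjoin ⟨i, rfl⟩, rfl⟩, ?_⟩
      exact fun h => hi (Subtype.coe_injective h)
    have htop := ContinuousMap.subalgebra_topologicalClosure_eq_top_of_separatesPoints A hsep
    have hg₀A : g₀ ∈ A.topologicalClosure := by
      rw [htop]; trivial
    have : (A.topologicalClosure : Set C(Fin n → I, ℝ)) = closure (A : Set _) := rfl
    have hsub : closure (A : Set C(Fin n → I, ℝ)) ⊆
        closure ((Submodule.span ℝ D : Submodule ℝ C(Fin n → I, ℝ)) : Set _) :=
      closure_mono fun g hg => hAV g hg
    exact hsub hg₀A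
  -- final epsilon argument
  have hfinal : Tendsto (fun k => J (G k) g₀) atTop (𝓝 (J Glim g₀)) := by
    rw [Metric.tendsto_atTop]
    intro ε hε
    obtain ⟨p, hpV, hpd⟩ := Metric.mem_closure_iff.mp hclos (ε/4) (by linarith)
    have hPp : Tendsto (fun k => J (G k) p) atTop (𝓝 (J Glim p)) := hVP p hpV
    rw [Metric.tendsto_atTop] at hPp
    obtain ⟨N, hN⟩ := hPp (ε/4) (by linarith)
    refine ⟨N, fun k hk => ?_⟩
    have hbound : ∀ (ν : Measure ℝ), IsProbabilityMeasure ν →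
        dist (J ν g₀) (J ν p) ≤ ε/4 := by
      intro ν hν
      haveI := hν
      rw [Real.dist_eq, ← integral_sub (hInt ν hν g₀) (hInt ν hν p)]
      calc |∫ μ, (g₀ (pc μ) - p (pc μ)) ∂(Measure.pi fun _ : Fin n => ν)|
          ≤ ∫ μ, |g₀ (pc μ) - p (pc μ)| ∂(Measure.pi fun _ : Fin n => ν) := by
            simpa [Real.norm_eq_abs] using norm_integral_le_integral_norm
              (μ := (Measure.pi fun _ : Fin n => ν))
              (f := fun μ => g₀ (pc μ) - p (pc μ))
        _ ≤ ∫ _μ, dist g₀ p ∂(Measure.pi fun _ : Fin n => ν) := by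
            refine integral_mono_ae ((hInt ν hν g₀).sub (hInt ν hν p)).abs
              (integrable_const _) (Eventually.of_forall fun μ => ?_)
            show |g₀ (pc μ) - p (pc μ)| ≤ dist g₀ p
            rw [← Real.dist_eq]
            exact ContinuousMap.dist_apply_le_dist _
        _ = dist g₀ p := by simp
        _ ≤ ε/4 := le_of_lt hpd
    have h1 := hbound (G k) (hGkp k)
    have h2 := hN k hk
    have h3 := hbound Glim hGp
    have h4 := dist_triangle4 (J (G k) g₀) (J (G k) p) (J Glim p) (J Glim g₀)
    rw [dist_comm (J Glim g₀)] at h3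
    linarith
  have heqk : ∀ k, R2G t (G k) = J (G k) g₀ := fun k => hae (G k) (hGkp k) (hGk k)
  have heql : R2G t Glim = J Glim g₀ := hae Glim hGp hG
  simp only [heqk, heql]
  exact hfinal
end

section
/- Square-root likelihood-ratio moment bound: Let n ≥ 1, μ ∈ ℝⁿ, and let h : ℝ → [0, ∞) be measurable. Then E_μ[ ∏_{i=1}^n √( h(Z_i) / f_μ(Z_i) ) ] = ∏_{i=1}^n ∫ √( h(z) / f_μ(z) ) φ(z − μ_i) dz ≤ ( ∫ √( h(z) f_μ(z) ) dz )ⁿ, as an inequality of [0, ∞]-valued quantities. -/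
open MeasureTheory ProbabilityTheory Real
open scoped ENNReal BigOperators

/-- The mixture density `f_μ(z) = (1/n) Σ_i φ(z - μ_i)` induced by fixed `μ`. -/
noncomputable def fmu {n : ℕ} (μ : Fin n → ℝ) (z : ℝ) : ℝ := (∑ i, phi (z - μ i)) / n

lemma lintegral_pi_prod : ∀ (n : ℕ) (μ : Fin n → Measure ℝ), (∀ i, SigmaFinite (μ i)) →
    ∀ (g : Fin n → ℝ → ℝ≥0∞), (∀ i, Measurable (g i)) →
    ∫⁻ x, ∏ i, g i (x i) ∂Measure.pi μ = ∏ i, ∫⁻ y, g i y ∂μ i := by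
  intro n
  induction n with
  | zero =>
    intro μ _ g _
    simp [lintegral_const, Measure.pi_univ]
  | succ m ih =>
    intro μ hσ g hg
    have e := measurePreserving_piFinSuccAbove μ 0
    have hG : Measurable fun p : ℝ × (Fin m → ℝ) => g 0 p.1 * ∏ j, g (Fin.succ j) (p.2 j) := by
      apply (hg 0).comp measurable_fst |>.mul
      exact Finset.measurable_prod _ fun j _ =>
        (hg _).comp ((measurable_pi_apply j).comp measurable_snd)
    have key : ∫⁻ x, ∏ i, g i (x i) ∂Measure.pi μ
        = ∫⁻ p, g 0 p.1 * ∏ j, g (Fin.succ j) (p.2 j)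
            ∂((μ 0).prod (Measure.pi fun j => μ (Fin.succAbove 0 j))) := by
      rw [← e.lintegral_comp hG]
      congr 1
      funext x
      rw [Fin.prod_univ_succAbove (fun i => g i (x i)) 0]
      simp [MeasurableEquiv.piFinSuccAbove, Fin.insertNthEquiv, Fin.zero_succAbove, Fin.tail]
    have step : ∫⁻ p : ℝ × (Fin m → ℝ), g 0 p.1 * ∏ j, g (Fin.succ j) (p.2 j)
          ∂((μ 0).prod (Measure.pi fun j => μ (Fin.succAbove 0 j)))
        = (∫⁻ y, g 0 y ∂μ 0) *
          ∫⁻ y, ∏ j, g (Fin.succ j) (y j) ∂Measure.pi (fun j => μ (Fin.succAbove 0 j)) :=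
      lintegral_prod_mul (hg 0).aemeasurable
        (Finset.measurable_prod _ fun j _ => (hg _).comp (measurable_pi_apply j)).aemeasurable
    rw [key, step]
    have := ih (fun j => μ (Fin.succAbove 0 j)) (fun j => hσ _) (fun j => g (Fin.succ j))
      (fun j => hg _)
    simp only [Fin.zero_succAbove] at this ⊢
    rw [this, Fin.prod_univ_succ]

lemma amgm_ennreal {n : ℕ} (hn : 1 ≤ n) (a : Fin n → ℝ≥0∞) (S : ℝ≥0∞)
    (hS : ∑ i, a i ≤ n * S) : ∏ i, a i ≤ S ^ n := by
  rcases eq_or_ne S ∞ with rfl | hStop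
  · rw [ENNReal.top_pow (by omega)]; exact le_top
  have hnR : (n : NNReal) ≠ 0 := Nat.cast_ne_zero.mpr (by omega)
  have hfin : ∀ i, a i ≠ ∞ := by
    intro i
    have h1 : a i ≤ ∑ j, a j := Finset.single_le_sum (fun j _ => zero_le) (Finset.mem_univ i)
    exact ne_top_of_le_ne_top (by exact ENNReal.mul_ne_top (ENNReal.natCast_ne_top n) hStop)
      (h1.trans hS)
  set b : Fin n → NNReal := fun i => (a i).toNNReal with hb
  have hab : ∀ i, a i = (b i : ℝ≥0∞) := fun i => (ENNReal.coe_toNNReal (hfin i)).symm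
  have hsum : ∑ i, b i ≤ n * S.toNNReal := by
    have : ((∑ i, b i : NNReal) : ℝ≥0∞) ≤ ((n * S.toNNReal : NNReal) : ℝ≥0∞) := by
      push_cast
      rw [← Finset.sum_congr rfl fun i _ => hab i]
      calc ∑ i, a i ≤ n * S := hS
        _ = (n : ℝ≥0∞) * (S.toNNReal : ℝ≥0∞) := by rw [ENNReal.coe_toNNReal hStop]
    exact_mod_cast this
  have hw : ∑ _i : Fin n, (n : NNReal)⁻¹ = 1 := by
    simp [Finset.sum_const, Finset.card_univ]
    rw [mul_inv_cancel₀ hnR]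
  have key := NNReal.geom_mean_le_arith_mean_weighted Finset.univ (fun _ => (n : NNReal)⁻¹) b hw
  have key2 : (∏ i, b i ^ ((n : ℝ)⁻¹)) ≤ S.toNNReal := by
    refine key.trans ?_
    rw [← Finset.mul_sum]
    calc (n : NNReal)⁻¹ * ∑ i, b i ≤ (n : NNReal)⁻¹ * (n * S.toNNReal) := by
          exact mul_le_mul_right hsum _
      _ = S.toNNReal := by rw [← mul_assoc, inv_mul_cancel₀ hnR, one_mul]
  have key3 : (∏ i, b i) ≤ S.toNNReal ^ n := by
    have := pow_le_pow_left₀ zero_le key2 n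
    rwa [← Finset.prod_pow, Finset.prod_congr rfl
      (fun i _ => by
        rw [← NNReal.rpow_natCast (b i ^ ((n:ℝ)⁻¹)) n, ← NNReal.rpow_mul,
          inv_mul_cancel₀ (by exact_mod_cast hnR), NNReal.rpow_one])] at this
  calc ∏ i, a i = ((∏ i, b i : NNReal) : ℝ≥0∞) := by
        push_cast; exact Finset.prod_congr rfl fun i _ => hab i
    _ ≤ ((S.toNNReal ^ n : NNReal) : ℝ≥0∞) := by exact_mod_cast key3
    _ = S ^ n := by push_cast [ENNReal.coe_toNNReal hStop]; ring

lemma phi_measurable : Measurable phi := by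
  unfold phi; fun_prop

lemma phi_nonneg (x : ℝ) : 0 ≤ phi x := by
  unfold phi; positivity

/-- Square-root likelihood-ratio moment bound:
`E_μ[∏ √(h(Z_i)/f_μ(Z_i))] = ∏ ∫ √(h(z)/f_μ(z)) φ(z-μ_i) dz ≤ (∫ √(h f_μ))ⁿ`,
as `[0,∞]`-valued quantities. -/
theorem sqrt_likelihood_ratio_moment
    (n : ℕ) (hn : 1 ≤ n) (μ : Fin n → ℝ) (h : ℝ → ℝ)
    (hmeas : Measurable h) (hnonneg : ∀ z, 0 ≤ h z) :
    (∫⁻ Z, ∏ i, ENNReal.ofReal (Real.sqrt (h (Z i) / fmu μ (Z i))) ∂(Pmu μ) =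
        ∏ i, ∫⁻ z, ENNReal.ofReal (Real.sqrt (h z / fmu μ z) * phi (z - μ i))) ∧
      (∏ i : Fin n, ∫⁻ z, ENNReal.ofReal (Real.sqrt (h z / fmu μ z) * phi (z - μ i))) ≤
        (∫⁻ z, ENNReal.ofReal (Real.sqrt (h z * fmu μ z))) ^ n := by
  have hf_meas : Measurable (fmu μ) := by
    unfold fmu
    exact (Finset.measurable_sum _ fun i _ =>
      phi_measurable.comp (measurable_id.sub_const (μ i))).div_const _
  have hq_meas : Measurable fun z => Real.sqrt (h z / fmu μ z) :=
    Real.continuous_sqrt.measurable.comp (hmeas.div hf_meas)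
  have hgi_meas : ∀ i : Fin n, Measurable fun z =>
      ENNReal.ofReal (Real.sqrt (h z / fmu μ z) * phi (z - μ i)) := fun i =>
    (hq_meas.mul (phi_measurable.comp (measurable_id.sub_const (μ i)))).ennreal_ofReal
  -- per-coordinate gaussian integral = Lebesgue integral against phi
  have eq2 : ∀ i : Fin n, ∫⁻ z, ENNReal.ofReal (Real.sqrt (h z / fmu μ z))
        ∂gaussianReal (μ i) 1
      = ∫⁻ z, ENNReal.ofReal (Real.sqrt (h z / fmu μ z) * phi (z - μ i)) := by
    intro i
    rw [gaussianReal_of_var_ne_zero _ one_ne_zero,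
      lintegral_withDensity_eq_lintegral_mul volume
        (measurable_gaussianPDF _ _) hq_meas.ennreal_ofReal]
    congr 1
    funext z
    have hpdf : gaussianPDFReal (μ i) 1 z = phi (z - μ i) := by
      unfold gaussianPDFReal phi
      norm_num
    simp only [Pi.mul_apply, gaussianPDF, hpdf]
    rw [← ENNReal.ofReal_mul (phi_nonneg _), mul_comm (phi (z - μ i))]
  have eq1 : ∫⁻ Z, ∏ i, ENNReal.ofReal (Real.sqrt (h (Z i) / fmu μ (Z i))) ∂(Pmu μ) =
      ∏ i, ∫⁻ z, ENNReal.ofReal (Real.sqrt (h z / fmu μ z) * phi (z - μ i)) := by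
    rw [Pmu, lintegral_pi_prod n _ (fun i => inferInstance)
      (fun _ z => ENNReal.ofReal (Real.sqrt (h z / fmu μ z)))
      (fun _ => hq_meas.ennreal_ofReal)]
    exact Finset.prod_congr rfl fun i _ => eq2 i
  refine ⟨eq1, ?_⟩
  -- pointwise sum identity
  have hnR : (n : ℝ) ≠ 0 := Nat.cast_ne_zero.mpr (by omega)
  have hpt : ∀ z, ∑ i, Real.sqrt (h z / fmu μ z) * phi (z - μ i)
      = n * Real.sqrt (h z * fmu μ z) := by
    intro z
    rw [← Finset.mul_sum]
    have hsum : ∑ i, phi (z - μ i) = n * fmu μ z := by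
      rw [fmu, mul_div_cancel₀ _ hnR]
    have hkey : Real.sqrt (h z) / Real.sqrt (fmu μ z) * fmu μ z
        = Real.sqrt (h z) * Real.sqrt (fmu μ z) := by
      rw [div_mul_eq_mul_div, mul_div_assoc, Real.div_sqrt]
    rw [hsum, Real.sqrt_div (hnonneg z), Real.sqrt_mul (hnonneg z),
      mul_comm ((n : ℝ)) (fmu μ z), ← mul_assoc, hkey]
    ring
  have hsum_eq : ∑ i, (∫⁻ z, ENNReal.ofReal (Real.sqrt (h z / fmu μ z) * phi (z - μ i)))
      = n * ∫⁻ z, ENNReal.ofReal (Real.sqrt (h z * fmu μ z)) := by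
    rw [← lintegral_finset_sum _ fun i _ => hgi_meas i]
    have hS_meas : Measurable fun z => ENNReal.ofReal (Real.sqrt (h z * fmu μ z)) :=
      (hmeas.mul hf_meas).sqrt.ennreal_ofReal
    rw [← lintegral_const_mul _ hS_meas]
    congr 1
    funext z
    rw [← ENNReal.ofReal_sum_of_nonneg fun i _ =>
      mul_nonneg (Real.sqrt_nonneg _) (phi_nonneg _)]
    rw [hpt z, ENNReal.ofReal_mul (by positivity), ENNReal.ofReal_natCast]
  exact amgm_ennreal hn _ _ (le_of_eq hsum_eq)
end
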